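/- arXiv:2410.13696 — 2 statements merged into one kernel-verified Lean document; each statement's English description precedes it below -/
import Mathlib

section
/- Let M ≥ 1 be a natural number and ε ≥ 0 a real number. Let p, κ, κ⁺ : Fin M → ℝ satisfy 0 ≤ p_j ≤ 1, κ_j ≥ 0 and κ_j ≤ κ⁺_j ≤ κ_j + ε for every j, and suppose ∑_{j=1}^{M} p_j·κ_j ≤ 1. Then the truncated policy satisfies ∑_{j=1}^{M} max(p_j − M·ε, 0)·κ⁺_j ≤ 1. (Shrinking each placement probability by M·ε restores feasibility of the resource constraint evaluated at the upper confidence bounds κ⁺.) -/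
/-- Shrinking each placement probability by `M·ε` restores feasibility of the resource
constraint evaluated at the upper confidence bounds `κ⁺`. -/
theorem truncated_policy_feasible (M : ℕ) (hM : 1 ≤ M) (ε : ℝ) (hε : 0 ≤ ε)
    (p κ κp : Fin M → ℝ)
    (hp : ∀ j, 0 ≤ p j ∧ p j ≤ 1) (hκ : ∀ j, 0 ≤ κ j)
    (hκp : ∀ j, κ j ≤ κp j ∧ κp j ≤ κ j + ε)
    (hcon : ∑ j, p j * κ j ≤ 1) :
    ∑ j, max (p j - M * ε) 0 * κp j ≤ 1 := by
  set x : ℝ := (M : ℝ) * ε with hxdef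
  have hx0 : 0 ≤ x := by positivity
  rcases le_or_gt x 1 with hx1 | hx1
  · have key : ∀ j, max (p j - x) 0 * κp j ≤ (1 - x) * (p j * κ j) + ε * (1 - x) := by
      intro j
      obtain ⟨hp0, hp1⟩ := hp j
      have hκ0 := hκ j
      obtain ⟨hκp1, hκp2⟩ := hκp j
      rcases le_or_gt (p j - x) 0 with h | h
      · rw [max_eq_right h]
        have h1 : 0 ≤ p j * κ j := mul_nonneg hp0 hκ0
        nlinarith
      · rw [max_eq_left h.le]
        have hA : 0 ≤ (p j - x) * (κ j + ε - κp j) :=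
          mul_nonneg h.le (by linarith)
        have hB : (p j - 1) * (ε + x * κ j) ≤ 0 :=
          mul_nonpos_of_nonpos_of_nonneg (by linarith)
            (by positivity)
        nlinarith [hA, hB]
    calc ∑ j, max (p j - x) 0 * κp j
        ≤ ∑ j, ((1 - x) * (p j * κ j) + ε * (1 - x)) :=
          Finset.sum_le_sum fun j _ => key j
      _ = (1 - x) * (∑ j, p j * κ j) + (M : ℝ) * (ε * (1 - x)) := by
          rw [Finset.sum_add_distrib, ← Finset.mul_sum, Finset.sum_const,
            Finset.card_univ, Fintype.card_fin, nsmul_eq_mul]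
      _ ≤ 1 := by
          have hsum0 : 0 ≤ ∑ j, p j * κ j :=
            Finset.sum_nonneg fun j _ => mul_nonneg (hp j).1 (hκ j)
          nlinarith [hcon, hx1, hx0, sq_nonneg x]
  · have hzero : ∀ j, max (p j - x) 0 * κp j = 0 := by
      intro j
      have : p j - x ≤ 0 := by linarith [(hp j).2]
      rw [max_eq_right this, zero_mul]
    simp only [hzero, Finset.sum_const_zero]
    norm_num
end

section
/- Let N ≥ 1 and M ≥ 1 be natural numbers and η ≥ 0 a real number. Let p* : Fin N → Fin M → ℝ satisfy 0 ≤ p*_{i,j} ≤ 1 for all i, j and ∑_{i=1}^{N} p*_{i,j} = 1 for every j. Define p̃ by p̃_{i,j} = max(p*_{i,j} − η, 0) for every i ≠ N and p̃_{N,j} = 1 − ∑_{i≠N} p̃_{i,j}. Let λ : Fin M → ℝ with λ_j ≥ 0 and ∑_{j=1}^{M} λ_j = 1, and let c : Fin N → Fin M → ℝ with 0 ≤ c_{i,j} ≤ 1 for all i, j and c_{N,j} = 1 for all j. Then: (a) 0 ≤ p̃_{i,j} ≤ 1 for all i, j and ∑_{i=1}^{N} p̃_{i,j} = 1 for every j (p̃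 is a valid placement policy); and (b) f(p̃, c, λ) ≤ f(p*, c, λ) + (N−1)·η, and in particular f(p̃, c, λ) ≤ f(p*, c, λ) + N·η. -/
/-- The mean cost of a placement policy `p` under costs `c` and arrival
distribution `λ`: `f(p, c, λ) = ∑ i ∑ j p i j * λ j * c i j`. -/
def meanCost (N M : ℕ) (p c : Fin N → Fin M → ℝ) (lam : Fin M → ℝ) : ℝ :=
  ∑ i, ∑ j, p i j * lam j * c i j

/-- Shrinking the optimal policy `p*` by `η` on all real nodes and putting the leftover
mass on the fictitious rejection node (the last node, of maximal cost 1) yields a valid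
placement policy whose mean cost exceeds that of `p*` by at most `(N−1)·η ≤ N·η`. -/
theorem tilde_policy_valid_and_cost (N M : ℕ) (hN : 1 ≤ N) (hM : 1 ≤ M)
    (η : ℝ) (hη : 0 ≤ η)
    (pstar : Fin N → Fin M → ℝ)
    (hps : ∀ i j, 0 ≤ pstar i j ∧ pstar i j ≤ 1)
    (hcol : ∀ j, ∑ i, pstar i j = 1)
    (lam : Fin M → ℝ) (hlam : ∀ j, 0 ≤ lam j) (hlamsum : ∑ j, lam j = 1)
    (c : Fin N → Fin M → ℝ) (hc : ∀ i j, 0 ≤ c i j ∧ c i j ≤ 1)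
    (lastNode : Fin N) (hlastNode : (lastNode : ℕ) = N - 1)
    (hcN : ∀ j, c lastNode j = 1)
    (ptilde : Fin N → Fin M → ℝ)
    (hpt1 : ∀ i, i ≠ lastNode → ∀ j, ptilde i j = max (pstar i j - η) 0)
    (hpt2 : ∀ j, ptilde lastNode j =
      1 - ∑ i ∈ Finset.univ.erase lastNode, ptilde i j) :
    (∀ i j, 0 ≤ ptilde i j ∧ ptilde i j ≤ 1) ∧
    (∀ j, ∑ i, ptilde i j = 1) ∧
    meanCost N M ptilde c lam ≤ meanCost N M pstar c lam + ((N : ℝ) - 1) * η ∧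
    meanCost N M ptilde c lam ≤ meanCost N M pstar c lam + (N : ℝ) * η := by
  have hptle : ∀ i, i ≠ lastNode → ∀ j, ptilde i j ≤ pstar i j := by
    intro i hi j
    rw [hpt1 i hi j]
    exact max_le (by linarith [(hps i j).1]) (hps i j).1
  have hptge : ∀ i, i ≠ lastNode → ∀ j, pstar i j - η ≤ ptilde i j := by
    intro i hi j; rw [hpt1 i hi j]; exact le_max_left _ _
  have hptnn' : ∀ i, i ≠ lastNode → ∀ j, 0 ≤ ptilde i j := by
    intro i hi j; rw [hpt1 i hi j]; exact le_max_right _ _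
  have hsumerase : ∀ j, ∑ i ∈ Finset.univ.erase lastNode, pstar i j
      = 1 - pstar lastNode j := by
    intro j
    have h := Finset.add_sum_erase Finset.univ (fun i => pstar i j)
      (Finset.mem_univ lastNode)
    have h2 := hcol j
    linarith
  have hlastge : ∀ j, pstar lastNode j ≤ ptilde lastNode j := by
    intro j
    rw [hpt2 j]
    have hsle : ∑ i ∈ Finset.univ.erase lastNode, ptilde i j
        ≤ ∑ i ∈ Finset.univ.erase lastNode, pstar i j :=
      Finset.sum_le_sum fun i hi => hptle i (Finset.ne_of_mem_erase hi) j
    rw [hsumerase j] at hsle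
    linarith
  have hnn : ∀ i j, 0 ≤ ptilde i j := by
    intro i j
    by_cases hi : i = lastNode
    · rw [hi]; exact le_trans (hps _ j).1 (hlastge j)
    · exact hptnn' i hi j
  have hcolsum : ∀ j, ∑ i, ptilde i j = 1 := by
    intro j
    have h := Finset.add_sum_erase Finset.univ (fun i => ptilde i j)
      (Finset.mem_univ lastNode)
    rw [← h, hpt2 j]; ring
  have hle1 : ∀ i j, ptilde i j ≤ 1 := by
    intro i j
    have h := hcolsum j
    have h2 := Finset.single_le_sum (f := fun i => ptilde i j)
      (fun i _ => hnn i j) (Finset.mem_univ i)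
    linarith
  have hcard : ((Finset.univ.erase lastNode).card : ℝ) = (N : ℝ) - 1 := by
    rw [Finset.card_erase_of_mem (Finset.mem_univ _), Finset.card_univ, Fintype.card_fin,
      Nat.cast_sub hN]
    simp
  have hlastle : ∀ j, ptilde lastNode j ≤ pstar lastNode j + ((N : ℝ) - 1) * η := by
    intro j
    rw [hpt2 j]
    have hge : ∑ i ∈ Finset.univ.erase lastNode, (pstar i j - η)
        ≤ ∑ i ∈ Finset.univ.erase lastNode, ptilde i j :=
      Finset.sum_le_sum fun i hi => hptge i (Finset.ne_of_mem_erase hi) j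
    rw [Finset.sum_sub_distrib, Finset.sum_const, nsmul_eq_mul, hsumerase j, hcard] at hge
    linarith
  have key : ∀ j, ∑ i, ptilde i j * lam j * c i j
      ≤ (∑ i, pstar i j * lam j * c i j) + lam j * (((N : ℝ) - 1) * η) := by
    intro j
    rw [← Finset.add_sum_erase Finset.univ (fun i => ptilde i j * lam j * c i j)
        (Finset.mem_univ lastNode),
      ← Finset.add_sum_erase Finset.univ (fun i => pstar i j * lam j * c i j)
        (Finset.mem_univ lastNode)]
    have h1 : ∑ i ∈ Finset.univ.erase lastNode, ptilde i j * lam j * c i j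
        ≤ ∑ i ∈ Finset.univ.erase lastNode, pstar i j * lam j * c i j :=
      Finset.sum_le_sum fun i hi =>
        mul_le_mul_of_nonneg_right
          (mul_le_mul_of_nonneg_right (hptle i (Finset.ne_of_mem_erase hi) j) (hlam j))
          (hc i j).1
    have h2 : ptilde lastNode j * lam j * c lastNode j
        ≤ pstar lastNode j * lam j * c lastNode j + lam j * (((N : ℝ) - 1) * η) := by
      rw [hcN j]
      have h3 := hlastle j
      have h4 := hlam j
      nlinarith
    linarith
  have hcost : meanCost N M ptilde c lam ≤ meanCost N M pstar c lam + ((N : ℝ) - 1) * η := by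
    unfold meanCost
    rw [Finset.sum_comm (f := fun i j => ptilde i j * lam j * c i j),
      Finset.sum_comm (f := fun i j => pstar i j * lam j * c i j)]
    have h : ∑ j, ∑ i, ptilde i j * lam j * c i j
        ≤ ∑ j, ((∑ i, pstar i j * lam j * c i j) + lam j * (((N : ℝ) - 1) * η)) :=
      Finset.sum_le_sum (fun j _ => key j)
    rw [Finset.sum_add_distrib, ← Finset.sum_mul, hlamsum, one_mul] at h
    exact h
  have hNη : ((N : ℝ) - 1) * η ≤ (N : ℝ) * η := by nlinarith
  exact ⟨fun i j => ⟨hnn i j, hle1 i j⟩, hcolsum, hcost, le_trans hcost (by linarith)⟩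
end
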